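/- Every uniformly locally path equi-connected metric space is uniformly locally chain equi-connected. -/

import Mathlib

open Set

/-- A continuity modulus: a nondecreasing `ω : (0,∞) → (0,∞)` with `ω(t) → 0` as `t → 0⁺`. -/
def ContinuityModulus (ω : ℝ → ℝ) : Prop :=
  MonotoneOn ω (Set.Ioi 0) ∧ (∀ t : ℝ, 0 < t → 0 < ω t) ∧
    Filter.Tendsto ω (nhdsWithin 0 (Set.Ioi 0)) (nhds 0)

/-- `c` is an `η`-chain of length `l` linking `x` and `y`. -/
def IsEtaChain {X : Type*} [MetricSpace X] (η : ℝ) (l : ℕ)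
    (c : Fin (l + 1) → X) (x y : X) : Prop :=
  c 0 = x ∧ c (Fin.last l) = y ∧ ∀ i : Fin l, dist (c i.castSucc) (c i.succ) < η

/-- `X` is uniformly locally path equi-connected. -/
def ULPathEquiConnected (X : Type*) [MetricSpace X] : Prop :=
  ∃ ε₀ : ℝ, 0 < ε₀ ∧ ∃ ω : ℝ → ℝ, ContinuityModulus ω ∧
    ∀ x y : X, dist x y < ε₀ → ∃ f : ℝ → X,
      ContinuousOn f (Icc 0 (dist x y)) ∧ f 0 = x ∧ f (dist x y) = y ∧
      ∀ s ∈ Icc 0 (dist x y), ∀ t ∈ Icc 0 (dist x y), ∀ u : ℝ, 0 < u →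
        |s - t| ≤ u → dist (f s) (f t) ≤ ω u

/-- `X` is uniformly locally chain equi-connected. -/
def ULChainEquiConnected (X : Type*) [MetricSpace X] : Prop :=
  ∀ ε : ℝ, 0 < ε → ∃ δ : ℝ, 0 < δ ∧ ∀ η : ℝ, 0 < η → ∃ l : ℕ,
    ∀ x y : X, dist x y < δ →
      ∃ l' : ℕ, l' ≤ l ∧ ∃ c : Fin (l' + 1) → X, IsEtaChain η l' c x y ∧
        ∀ i j : Fin (l' + 1), dist (c i) (c j) < ε

/-!
Connect `x` and `y` by the path `f` on `[0, d]`, `d = dist x y`, and sample it at the `n + 1`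
equally spaced parameters `i * (d / n)` with `n = ⌈d / u⌉₊`. Consecutive parameters are at most `u`
apart, so consecutive samples are `ω u`-close, and any two parameters are at most `d < δ` apart, so
all samples are `ω δ`-close. Choosing `u` and `δ` with `ω u < η` and `ω δ < ε`, and taking
`d < min δ ε₀`, gives an `η`-chain of diameter `< ε` whose length `n ≤ ⌈min δ ε₀ / u⌉₊` depends
only on `ε` and `η`.
-/

lemma exists_pos_lt_of_tendsto_nhdsGT_zero {ω : ℝ → ℝ}
    (hω : Filter.Tendsto ω (nhdsWithin 0 (Ioi 0)) (nhds 0)) {ε : ℝ} (hε : 0 < ε) :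
    ∃ t : ℝ, 0 < t ∧ ω t < ε := by
  obtain ⟨t, hωt, ht⟩ :=
    ((hω.eventually (gt_mem_nhds hε)).and self_mem_nhdsWithin).exists
  exact ⟨t, ht, hωt⟩

lemma natCast_mul_div_mem_Icc {d : ℝ} (hd : 0 ≤ d) {i n : ℕ} (hi : i ≤ n) :
    (i : ℝ) * (d / n) ∈ Icc 0 d := by
  refine ⟨by positivity, ?_⟩
  rcases n.eq_zero_or_pos with rfl | hn
  · simpa using hd
  calc (i : ℝ) * (d / n) ≤ n * (d / n) := by gcongr
    _ = d := mul_div_cancel₀ d (by positivity)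

lemma div_natCeil_div_le (d : ℝ) {u : ℝ} (hu : 0 < u) : d / ⌈d / u⌉₊ ≤ u := by
  rcases (⌈d / u⌉₊).eq_zero_or_pos with h | h
  · simpa [h] using hu.le
  rw [div_le_iff₀ (by exact_mod_cast h), ← div_le_iff₀' hu]
  exact Nat.le_ceil _

section UniformSample

variable {X : Type*} [MetricSpace X]

noncomputable def uniformSample (f : ℝ → X) (d : ℝ) (n : ℕ) : Fin (n + 1) → X :=
  fun i => f (i * (d / n))

variable {f : ℝ → X} {ω : ℝ → ℝ} {d : ℝ}

lemma isEtaChain_uniformSample (hd : 0 ≤ d)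
    (hf : ∀ s ∈ Icc 0 d, ∀ t ∈ Icc 0 d, ∀ v : ℝ, 0 < v → |s - t| ≤ v → dist (f s) (f t) ≤ ω v)
    {u η : ℝ} (hu : 0 < u) (hωu : ω u < η) :
    IsEtaChain η ⌈d / u⌉₊ (uniformSample f d ⌈d / u⌉₊) (f 0) (f d) := by
  set n := ⌈d / u⌉₊
  refine ⟨by simp [uniformSample], ?_, fun i => ?_⟩
  · rcases n.eq_zero_or_pos with hn | hn
    · have hd0 : d = 0 := le_antisymm
        (by simpa using (div_le_iff₀ hu).mp (Nat.ceil_eq_zero.mp hn)) hd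
      simp [uniformSample, hd0]
    · simp [uniformSample, mul_div_cancel₀ d (show (n : ℝ) ≠ 0 by positivity)]
  have hstep : |(i.castSucc : ℝ) * (d / n) - (i.succ : ℝ) * (d / n)| ≤ u := by
    rw [Fin.val_succ, Fin.val_castSucc, Nat.cast_succ, ← sub_mul, sub_add_cancel_left,
      neg_one_mul, abs_neg, abs_of_nonneg (by positivity)]
    exact div_natCeil_div_le d hu
  exact (hf _ (natCast_mul_div_mem_Icc hd i.castSucc.is_le) _
    (natCast_mul_div_mem_Icc hd i.succ.is_le) u hu hstep).trans_lt hωu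

lemma dist_uniformSample_le (hd : 0 ≤ d)
    (hf : ∀ s ∈ Icc 0 d, ∀ t ∈ Icc 0 d, ∀ v : ℝ, 0 < v → |s - t| ≤ v → dist (f s) (f t) ≤ ω v)
    {δ : ℝ} (hδ : 0 < δ) (hdδ : d ≤ δ) {n : ℕ} (i j : Fin (n + 1)) :
    dist (uniformSample f d n i) (uniformSample f d n j) ≤ ω δ := by
  have hi := natCast_mul_div_mem_Icc hd i.is_le
  have hj := natCast_mul_div_mem_Icc hd j.is_le
  refine hf _ hi _ hj δ hδ ?_
  rw [← Real.dist_eq]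
  exact (Real.dist_le_of_mem_Icc hi hj).trans (by linarith)

end UniformSample

/-- Every uniformly locally path equi-connected metric space is uniformly locally
chain equi-connected. -/
theorem ulpec_implies_ulcec {X : Type*} [MetricSpace X]
    (h : ULPathEquiConnected X) : ULChainEquiConnected X := by
  obtain ⟨ε₀, hε₀, ω, ⟨-, -, hω⟩, hpath⟩ := h
  intro ε hε
  obtain ⟨δ, hδ, hωδ⟩ := exists_pos_lt_of_tendsto_nhdsGT_zero hω hε
  refine ⟨min δ ε₀, lt_min hδ hε₀, fun η hη => ?_⟩
  obtain ⟨u, hu, hωu⟩ := exists_pos_lt_of_tendsto_nhdsGT_zero hω hη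
  refine ⟨⌈min δ ε₀ / u⌉₊, fun x y hxy => ?_⟩
  obtain ⟨f, -, hf0, hfd, hf⟩ := hpath x y (hxy.trans_le (min_le_right _ _))
  have hdδ : dist x y ≤ δ := hxy.le.trans (min_le_left _ _)
  refine ⟨⌈dist x y / u⌉₊, Nat.ceil_le_ceil (by gcongr), uniformSample f (dist x y) _, ?_,
    fun i j => (dist_uniformSample_le dist_nonneg hf hδ hdδ i j).trans_lt hωδ⟩
  simpa only [hf0, hfd] using isEtaChain_uniformSample dist_nonneg hf hu hωu
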